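/- arXiv:2402.03232 — 2 statements merged into one kernel-verified Lean document; each statement's English description precedes it below -/
import Mathlib

section
/- Let μ₀, μ₁ ∈ ℝ, σ₀, σ₁ > 0, t ∈ [0,1), and x ∈ ℝ. Then the explicit flow-matching vector field between the Gaussians N(μ₀, σ₀²) and N(μ₁, σ₁²), v(x,t) = [∫ (x₁ − x) exp(−((x − t x₁)/(1−t) − μ₀)²/(2σ₀²) − (x₁ − μ₁)²/(2σ₁²)) dx₁] / [(1−t) ∫ exp(−((x − t x₁)/(1−t) − μ₀)²/(2σ₀²) − (x₁ − μ₁)²/(2σ₁²)) dx₁], admits the closed form v(x,t) = (σ₁² t (x − μ₀) − σ₀² (1−t)(x − μ₁)) / (σ₁² t² + σ₀² (1−t)²). -/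
/-!
Completing the square in `x₁`, the integrand's exponent is `C - b (x₁ - m)²` with `b > 0`, where
`m = (σ₁² t (x - (1 - t) μ₀) + σ₀² (1 - t)² μ₁) / (σ₁² t² + σ₀² (1 - t)²)`. The ratio of the two
integrals is therefore the mean of a Gaussian centred at `m`, minus `x`, i.e. `m - x`, and dividing by
`1 - t` gives the closed form.
-/

open MeasureTheory Real

theorem integral_mul_exp_neg_mul_sq_eq_zero (b : ℝ) : ∫ y : ℝ, y * exp (-b * y ^ 2) = 0 := by
  have h := integral_neg_eq_self (fun y : ℝ => y * exp (-b * y ^ 2)) volume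
  simp only [neg_sq, neg_mul, integral_neg] at h
  simpa only [neg_mul] using neg_eq_self.mp h

theorem integral_sub_mul_exp_neg_mul_sq_sub {b : ℝ} (hb : 0 < b) (m c : ℝ) :
    ∫ y : ℝ, (y - c) * exp (-b * (y - m) ^ 2) = (m - c) * ∫ y : ℝ, exp (-b * (y - m) ^ 2) := by
  rw [← integral_add_right_eq_self (fun y => (y - c) * exp (-b * (y - m) ^ 2)) m,
    ← integral_add_right_eq_self (fun y => exp (-b * (y - m) ^ 2)) m]
  simp only [add_sub_cancel_right, add_sub_assoc, add_mul]
  rw [integral_add (integrable_mul_exp_neg_mul_sq hb) ((integrable_exp_neg_mul_sq hb).const_mul _),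
    integral_mul_exp_neg_mul_sq_eq_zero, integral_const_mul, zero_add]

theorem integral_sub_mul_exp_div_integral_exp {b : ℝ} (hb : 0 < b) (C m c : ℝ) :
    (∫ y : ℝ, (y - c) * exp (C - b * (y - m) ^ 2)) / ∫ y : ℝ, exp (C - b * (y - m) ^ 2) =
      m - c := by
  have hsplit (y : ℝ) : exp (C - b * (y - m) ^ 2) = exp C * exp (-b * (y - m) ^ 2) := by
    rw [← exp_add, neg_mul, sub_eq_add_neg]
  have hmass : ∫ y : ℝ, exp (-b * (y - m) ^ 2) = √(π / b) := by
    rw [integral_sub_right_eq_self (fun y => exp (-b * y ^ 2)) m, integral_gaussian]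
  have hmass_pos : 0 < √(π / b) := sqrt_pos.mpr (by positivity)
  simp_rw [hsplit, mul_left_comm _ (exp C), integral_const_mul,
    integral_sub_mul_exp_neg_mul_sq_sub hb, hmass]
  field_simp

/-- Closed form of the explicit flow-matching vector field between the Gaussians
`N(μ₀, σ₀²)` and `N(μ₁, σ₁²)` under the linear conditional flow. -/
theorem gaussian_flow_matching_vector_field_closed_form (μ₀ μ₁ σ₀ σ₁ t x : ℝ)
    (hσ₀ : 0 < σ₀) (hσ₁ : 0 < σ₁) (ht : t ∈ Set.Ico (0 : ℝ) 1) :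
    (∫ x₁ : ℝ, (x₁ - x) *
        Real.exp (-((x - t * x₁) / (1 - t) - μ₀) ^ 2 / (2 * σ₀ ^ 2) -
          (x₁ - μ₁) ^ 2 / (2 * σ₁ ^ 2))) /
      ((1 - t) * ∫ x₁ : ℝ,
        Real.exp (-((x - t * x₁) / (1 - t) - μ₀) ^ 2 / (2 * σ₀ ^ 2) -
          (x₁ - μ₁) ^ 2 / (2 * σ₁ ^ 2))) =
    (σ₁ ^ 2 * t * (x - μ₀) - σ₀ ^ 2 * (1 - t) * (x - μ₁)) /
      (σ₁ ^ 2 * t ^ 2 + σ₀ ^ 2 * (1 - t) ^ 2) := by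
  have hu : 0 < 1 - t := sub_pos.mpr ht.2
  set D := σ₁ ^ 2 * t ^ 2 + σ₀ ^ 2 * (1 - t) ^ 2
  have hD : 0 < D := by positivity
  set b := D / (2 * σ₀ ^ 2 * σ₁ ^ 2 * (1 - t) ^ 2)
  set m := (t * σ₁ ^ 2 * (x - μ₀ * (1 - t)) + μ₁ * σ₀ ^ 2 * (1 - t) ^ 2) / D
  set C := -((x - t * m) / (1 - t) - μ₀) ^ 2 / (2 * σ₀ ^ 2) - (m - μ₁) ^ 2 / (2 * σ₁ ^ 2)
  have hsquare (x₁ : ℝ) : -((x - t * x₁) / (1 - t) - μ₀) ^ 2 / (2 * σ₀ ^ 2) -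
      (x₁ - μ₁) ^ 2 / (2 * σ₁ ^ 2) = C - b * (x₁ - m) ^ 2 := by
    simp only [C, b, m, D]
    field_simp
    ring
  simp_rw [hsquare]
  rw [mul_comm, ← div_div, integral_sub_mul_exp_div_integral_exp (by positivity)]
  simp only [m]
  field_simp
  ring
end

section
/- Let μ ∈ ℝ, σ > 0, t ∈ [0,1), x ∈ ℝ, and let ρ₀ = N(0,1) be the standard Gaussian density and ρ₁(x₁) = ½ N(x₁ | μ, σ²) + ½ N(x₁ | −μ, σ²) be a symmetric two-component Gaussian mixture. Set D(t) = σ² t² + (1−t)², g₊(x,t) = exp(−(x − μ t)²/(2 D(t))), g₋(x,t) = exp(−(x + μ t)²/(2 D(t))), u₊(x,t) = (σ² t x − (1−t)(x − μ))/D(t), and u₋(x,t) = (σ² t x − (1−t)(x + μ))/D(t). Then the explicit flow-matching vector field v(x,t) = [∫ (x₁ − x) ρ₀((x − t x₁)/(1−t)) ρ₁(x₁) dx₁] / [(1−t) ∫ ρ₀((x − t x₁)/(1−t)) ρ₁(x₁) dx₁] equals the weighted average v(x,t) = (g₊(x,t) u₊(x,t) + g₋(x,t) u₋(x,t)) / (g₊(x,t)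 + g₋(x,t)). -/
/-!
Completing the square in `y`, each mixture component factors as
`N(0,1)((x - t y)/s) · N(y | c, σ²) = s · N(x | c t, D) · N(y | m_c, s²σ²/D)`
with `s = 1 - t`, `D = σ² t² + s²` and posterior mean `m_c = (t σ² x + s² c)/D`.
Integrating against `1` and against `y - x` gives `s · N(x | c t, D)` and
`s · N(x | c t, D) · (m_c - x)`, where `m_c - x = s · u_c`. The common factor
`s / √(2π D)` cancels in the quotient, leaving the average of `u₊, u₋` with weights
`g₊, g₋`.
-/

open MeasureTheory Real

/-- One-dimensional Gaussian density `N(y | μ, σ²)`. -/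
noncomputable def gaussDensity (μ σ y : ℝ) : ℝ :=
  (Real.sqrt (2 * Real.pi * σ ^ 2))⁻¹ * Real.exp (-(y - μ) ^ 2 / (2 * σ ^ 2))

open ProbabilityTheory

theorem gaussDensity_eq_gaussianPDFReal (μ σ : ℝ) :
    gaussDensity μ σ = gaussianPDFReal μ (σ ^ 2).toNNReal := by
  ext y
  simp [gaussDensity, gaussianPDFReal, sq_nonneg]

theorem gaussDensity_sqrt (μ : ℝ) {v : ℝ} (hv : 0 ≤ v) (y : ℝ) :
    gaussDensity μ √v y = (√(2 * π * v))⁻¹ * exp (-(y - μ) ^ 2 / (2 * v)) := by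
  rw [gaussDensity, sq_sqrt hv]

theorem integrable_gaussDensity (μ σ : ℝ) : Integrable (gaussDensity μ σ) := by
  rw [gaussDensity_eq_gaussianPDFReal]
  exact integrable_gaussianPDFReal _ _

theorem integral_gaussDensity (μ : ℝ) {σ : ℝ} (hσ : σ ≠ 0) :
    ∫ y, gaussDensity μ σ y = 1 := by
  rw [gaussDensity_eq_gaussianPDFReal]
  exact integral_gaussianPDFReal_eq_one μ (by simpa using hσ)

theorem integrable_sub_mul_gaussDensity (a μ : ℝ) {σ : ℝ} (hσ : σ ≠ 0) :
    Integrable fun y => (y - a) * gaussDensity μ σ y := by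
  have h : Integrable (fun y => y - a) (gaussianReal μ (σ ^ 2).toNNReal) :=
    ((memLp_id_gaussianReal 1).integrable le_rfl).sub (integrable_const a)
  rw [gaussianReal_of_var_ne_zero _ (by simpa using hσ),
    integrable_withDensity_iff_integrable_smul' (measurable_gaussianPDF _ _)
      (ae_of_all _ fun _ => gaussianPDF_lt_top)] at h
  simpa [toReal_gaussianPDF, mul_comm, gaussDensity_eq_gaussianPDFReal] using h

theorem integral_sub_mul_gaussDensity (a μ : ℝ) {σ : ℝ} (hσ : σ ≠ 0) :
    ∫ y, (y - a) * gaussDensity μ σ y = μ - a := by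
  have h := integral_gaussianReal_eq_integral_smul (μ := μ) (f := fun y => y - a)
    (v := (σ ^ 2).toNNReal) (by simpa using hσ)
  rw [integral_sub (f := fun x => x) ((memLp_id_gaussianReal 1).integrable le_rfl)
    (integrable_const a)] at h
  simpa [mul_comm, gaussDensity_eq_gaussianPDFReal] using h.symm

theorem gaussDensity_div_mul_gaussDensity {s σ : ℝ} (hs : 0 < s) (hσ : σ ≠ 0)
    (x t c y : ℝ) :
    gaussDensity 0 1 ((x - t * y) / s) * gaussDensity c σ y =
      s * gaussDensity (c * t) √(σ ^ 2 * t ^ 2 + s ^ 2) x *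
        gaussDensity ((t * σ ^ 2 * x + s ^ 2 * c) / (σ ^ 2 * t ^ 2 + s ^ 2))
          (s * σ / √(σ ^ 2 * t ^ 2 + s ^ 2)) y := by
  set D := σ ^ 2 * t ^ 2 + s ^ 2
  have hD : 0 < D := by positivity
  have hconst : (√(2 * π * 1 ^ 2))⁻¹ * (√(2 * π * σ ^ 2))⁻¹ =
      s * (√(2 * π * √D ^ 2))⁻¹ * (√(2 * π * (s * σ / √D) ^ 2))⁻¹ := by
    rw [← sq_eq_sq₀ (by positivity) (by positivity)]
    simp only [mul_pow, inv_pow, div_pow, sq_sqrt hD.le]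
    rw [sq_sqrt (by positivity), sq_sqrt (by positivity), sq_sqrt (by positivity),
      sq_sqrt (by positivity)]
    field_simp
  have hexp : -((x - t * y) / s - 0) ^ 2 / (2 * 1 ^ 2) + -(y - c) ^ 2 / (2 * σ ^ 2) =
      -(x - c * t) ^ 2 / (2 * √D ^ 2) +
        -(y - (t * σ ^ 2 * x + s ^ 2 * c) / D) ^ 2 / (2 * (s * σ / √D) ^ 2) := by
    rw [div_pow, sq_sqrt hD.le]
    field_simp
    ring
  unfold gaussDensity
  calc _ = ((√(2 * π * 1 ^ 2))⁻¹ * (√(2 * π * σ ^ 2))⁻¹) *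
        exp (-((x - t * y) / s - 0) ^ 2 / (2 * 1 ^ 2) + -(y - c) ^ 2 / (2 * σ ^ 2)) := by
        rw [exp_add]; ring
    _ = _ := by rw [hconst, hexp, exp_add]; ring

theorem integrable_gaussDensity_div_mul_gaussDensity {s σ : ℝ} (hs : 0 < s) (hσ : σ ≠ 0)
    (x t c : ℝ) :
    Integrable fun y => gaussDensity 0 1 ((x - t * y) / s) * gaussDensity c σ y := by
  simp_rw [gaussDensity_div_mul_gaussDensity hs hσ]
  exact (integrable_gaussDensity _ _).const_mul _

theorem integral_gaussDensity_div_mul_gaussDensity {s σ : ℝ} (hs : 0 < s) (hσ : σ ≠ 0)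
    (x t c : ℝ) :
    ∫ y, gaussDensity 0 1 ((x - t * y) / s) * gaussDensity c σ y =
      s * gaussDensity (c * t) √(σ ^ 2 * t ^ 2 + s ^ 2) x := by
  simp_rw [gaussDensity_div_mul_gaussDensity hs hσ]
  rw [integral_const_mul, integral_gaussDensity _ (by positivity), mul_one]

theorem integrable_sub_mul_gaussDensity_div_mul_gaussDensity {s σ : ℝ} (hs : 0 < s)
    (hσ : σ ≠ 0) (x t c : ℝ) :
    Integrable fun y => (y - x) * gaussDensity 0 1 ((x - t * y) / s) * gaussDensity c σ y := by
  simp_rw [mul_assoc, gaussDensity_div_mul_gaussDensity hs hσ, mul_left_comm (_ - x)]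
  exact (integrable_sub_mul_gaussDensity _ _ (by positivity)).const_mul _

theorem integral_sub_mul_gaussDensity_div_mul_gaussDensity {s σ : ℝ} (hs : 0 < s)
    (hσ : σ ≠ 0) (x t c : ℝ) :
    ∫ y, (y - x) * gaussDensity 0 1 ((x - t * y) / s) * gaussDensity c σ y =
      s * gaussDensity (c * t) √(σ ^ 2 * t ^ 2 + s ^ 2) x *
        ((t * σ ^ 2 * x + s ^ 2 * c) / (σ ^ 2 * t ^ 2 + s ^ 2) - x) := by
  simp_rw [mul_assoc, gaussDensity_div_mul_gaussDensity hs hσ, mul_left_comm (_ - x)]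
  rw [integral_const_mul, integral_sub_mul_gaussDensity _ _ (by positivity)]
  ring

theorem integral_mul_half_add_half {w f g : ℝ → ℝ} (hf : Integrable fun y => w y * f y)
    (hg : Integrable fun y => w y * g y) :
    ∫ y, w y * (1 / 2 * f y + 1 / 2 * g y) =
      1 / 2 * (∫ y, w y * f y) + 1 / 2 * ∫ y, w y * g y := by
  simp_rw [mul_add, mul_left_comm (w _)]
  rw [integral_add (hf.const_mul _) (hg.const_mul _), integral_const_mul, integral_const_mul]

/-- Closed form of the explicit flow-matching vector field from the standard
Gaussian to the symmetric two-component Gaussian mixture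
`½ N(μ,σ²) + ½ N(−μ,σ²)`: it is the `g₊,g₋`-weighted average of the closed-form
fields `u₊,u₋` to each component. -/
theorem gaussian_mixture_flow_matching_vector_field (μ σ t x : ℝ)
    (hσ : 0 < σ) (ht : t ∈ Set.Ico (0 : ℝ) 1)
    (ρ0 ρ1 : ℝ → ℝ)
    (hρ0 : ∀ y, ρ0 y = gaussDensity 0 1 y)
    (hρ1 : ∀ y, ρ1 y = (1 / 2) * gaussDensity μ σ y + (1 / 2) * gaussDensity (-μ) σ y)
    (D : ℝ) (hD : D = σ ^ 2 * t ^ 2 + (1 - t) ^ 2)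
    (gp gm up um : ℝ)
    (hgp : gp = Real.exp (-(x - μ * t) ^ 2 / (2 * D)))
    (hgm : gm = Real.exp (-(x + μ * t) ^ 2 / (2 * D)))
    (hup : up = (σ ^ 2 * t * x - (1 - t) * (x - μ)) / D)
    (hum : um = (σ ^ 2 * t * x - (1 - t) * (x + μ)) / D) :
    (∫ x₁ : ℝ, (x₁ - x) * (ρ0 ((x - t * x₁) / (1 - t)) * ρ1 x₁)) /
      ((1 - t) * ∫ x₁ : ℝ, ρ0 ((x - t * x₁) / (1 - t)) * ρ1 x₁) =
    (gp * up + gm * um) / (gp + gm) := by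
  have hs : 0 < 1 - t := sub_pos.2 ht.2
  obtain rfl : ρ0 = gaussDensity 0 1 := funext hρ0
  obtain rfl : ρ1 = fun y => 1 / 2 * gaussDensity μ σ y + 1 / 2 * gaussDensity (-μ) σ y :=
    funext hρ1
  subst hD hgp hgm hup hum
  have hσ₀ : σ ≠ 0 := hσ.ne'
  simp_rw [← mul_assoc]
  rw [integral_mul_half_add_half
      (integrable_sub_mul_gaussDensity_div_mul_gaussDensity hs hσ₀ _ _ _)
      (integrable_sub_mul_gaussDensity_div_mul_gaussDensity hs hσ₀ _ _ _),
    integral_mul_half_add_half (integrable_gaussDensity_div_mul_gaussDensity hs hσ₀ _ _ _)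
      (integrable_gaussDensity_div_mul_gaussDensity hs hσ₀ _ _ _),
    integral_sub_mul_gaussDensity_div_mul_gaussDensity hs hσ₀,
    integral_sub_mul_gaussDensity_div_mul_gaussDensity hs hσ₀,
    integral_gaussDensity_div_mul_gaussDensity hs hσ₀,
    integral_gaussDensity_div_mul_gaussDensity hs hσ₀,
    gaussDensity_sqrt _ (by positivity), gaussDensity_sqrt _ (by positivity),
    neg_mul, sub_neg_eq_add]
  field_simp
  ring
end
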